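/- arXiv:1511.00661 — 3 statements merged into one kernel-verified Lean document; each statement's English description precedes it below -/
import Mathlib

section
/- There exists a universal constant C' > 0 with the following property. Let f^{(1)}, …, f^{(m)} ∈ ℝ^n be the frequency vectors of an insertion-only stream, let Z_1, …, Z_n be i.i.d. standard Gaussian random variables, and define X_t = ∑_{j=1}^n Z_j f_j^{(t)} for t ∈ [m]. Then E[ sup_{t ∈ [m]} |X_t| ] ≤ C' · ‖f^{(m)}‖₂. -/
open MeasureTheory ProbabilityTheory
open scoped ENNReal

/-- The Euclidean (ℓ₂) norm of a vector in ℝ^k. -/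
noncomputable def l2norm {k : ℕ} (x : Fin k → ℝ) : ℝ := Real.sqrt (∑ i, (x i) ^ 2)

/-- The frequency vector at time `t` of the insertion-only stream `p` over universe `[n]`:
`freq p t j = #{t' ≤ t : p_{t'} = j}` (with stream positions `0, …, m-1` standing for
`1, …, m`, so position `t'` counts iff `t' < t`). -/
noncomputable def freq {n m : ℕ} (p : Fin m → Fin n) (t : ℕ) : Fin n → ℝ :=
  fun j => ((Finset.univ.filter fun t' : Fin m => (t' : ℕ) < t ∧ p t' = j).card : ℝ)

/-!
For an insertion-only stream, `0 ≤ f⁽ˢ⁾ ≤ f⁽ᵗ⁾` coordinatewise when `s ≤ t`, hence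
`‖f⁽ᵗ⁾ - f⁽ˢ⁾‖² ≤ F t - F s` with `F t = ‖f⁽ᵗ⁾‖²` nondecreasing: the increments `X_t - X_s` are
sub-Gaussian with variance proxy `F t - F s`. We chain along `F`. At level `ℓ` the times are
grouped into buckets of `F`-width `2 F(m) / 4^ℓ`, and `t` is approximated by the first time
`π_ℓ t` of its bucket. The buckets are nested, so `π_ℓ t ≤ π_{ℓ+1} t ≤ t`; the links
`X (π_{ℓ+1} t) - X (π_ℓ t)` take at most `4^{ℓ+1}` values, each with proxy below `2 F(m) / 4^ℓ`.
The maximal inequality `E max_{i ≤ N} |Y_i| ≤ σ (log N + 4)` for `σ²`-sub-Gaussian `Y_i` bounds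
level `ℓ` by `√(2 F(m)) (2ℓ + 6) / 2^ℓ`, which is summable, and the remainder
`X_t - X (π_L t)` is negligible once `2^L ≥ log (m + 1) + 4`.
-/

open scoped NNReal

lemma abs_le_add_inv_mul_exp {l : ℝ} (hl : 0 < l) (a y : ℝ) :
    |y| ≤ a + l⁻¹ * Real.exp (-(l * a)) * (Real.exp (l * y) + Real.exp (-l * y)) := by
  have hlin : l * (|y| - a) ≤ Real.exp (l * (|y| - a)) := by
    linarith [Real.add_one_le_exp (l * (|y| - a))]
  have habs : Real.exp (l * |y|) ≤ Real.exp (l * y) + Real.exp (-l * y) := by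
    rcases abs_cases y with ⟨hy, -⟩ | ⟨hy, -⟩ <;> rw [hy]
    · exact le_add_of_nonneg_right (Real.exp_pos _).le
    · rw [mul_neg, ← neg_mul]
      exact le_add_of_nonneg_left (Real.exp_pos _).le
  calc |y| = a + l⁻¹ * (l * (|y| - a)) := by field_simp; ring
    _ ≤ a + l⁻¹ * Real.exp (l * (|y| - a)) := by gcongr
    _ = a + l⁻¹ * Real.exp (-(l * a)) * Real.exp (l * |y|) := by
      rw [mul_assoc, ← Real.exp_add]; ring_nf
    _ ≤ _ := by gcongr

lemma sup'_abs_nonneg {ι : Type*} {S : Finset ι} (hS : S.Nonempty) (y : ι → ℝ) :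
    0 ≤ S.sup' hS fun i => |y i| :=
  (abs_nonneg _).trans (Finset.le_sup' (fun i => |y i|) hS.choose_spec)

lemma sup'_abs_le_log_card_add {ι : Type*} {S : Finset ι} (hS : S.Nonempty) (y : ι → ℝ)
    {σ : ℝ} (hσ : 0 < σ) :
    S.sup' hS (fun i => |y i|) ≤ σ * Real.log S.card
      + σ * (S.card : ℝ)⁻¹ * ∑ i ∈ S, (Real.exp (σ⁻¹ * y i) + Real.exp (-σ⁻¹ * y i)) := by
  refine Finset.sup'_le hS _ fun i hi => ?_
  have h := abs_le_add_inv_mul_exp (inv_pos.2 hσ) (σ * Real.log S.card) (y i)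
  rw [inv_inv, inv_mul_cancel_left₀ hσ.ne', Real.exp_neg,
    Real.exp_log (Nat.cast_pos.2 hS.card_pos)] at h
  refine h.trans ?_
  gcongr
  exact Finset.single_le_sum (f := fun i => Real.exp (σ⁻¹ * y i) + Real.exp (-σ⁻¹ * y i))
    (fun _ _ => by positivity) hi

lemma sum_range_two_mul_add_six_div_two_pow (L : ℕ) :
    ∑ ℓ ∈ Finset.range L, (2 * ℓ + 6 : ℝ) / 2 ^ ℓ = 16 - (4 * L + 16) / 2 ^ L := by
  induction L with
  | zero => norm_num
  | succ L ih =>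
    rw [Finset.sum_range_succ, ih, pow_succ]
    push_cast
    field_simp
    ring

lemma sum_sq_sub_le_sum_sq_sub_sum_sq {ι : Type*} [Fintype ι] {u v : ι → ℝ} (hu : 0 ≤ u)
    (huv : u ≤ v) : ∑ j, (v j - u j) ^ 2 ≤ ∑ j, v j ^ 2 - ∑ j, u j ^ 2 := by
  rw [← Finset.sum_sub_distrib]
  refine Finset.sum_le_sum fun j _ => ?_
  have h0 : 0 ≤ u j := hu j
  have h1 : u j ≤ v j := huv j
  nlinarith

namespace ProbabilityTheory

variable {Ω : Type*} [MeasurableSpace Ω] {μ : Measure Ω}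

lemma HasSubgaussianMGF.mono {X : Ω → ℝ} {c c' : ℝ≥0} (h : HasSubgaussianMGF X c μ)
    (hc : c ≤ c') : HasSubgaussianMGF X c' μ where
  integrable_exp_mul := h.integrable_exp_mul
  mgf_le t := (h.mgf_le t).trans <| Real.exp_le_exp.mpr <| by gcongr

lemma hasSubgaussianMGF_of_map_eq_gaussianReal {X : Ω → ℝ} {v : ℝ≥0} (hX : AEMeasurable X μ)
    (h : μ.map X = gaussianReal 0 v) : HasSubgaussianMGF X v μ := by
  rw [← HasSubgaussianMGF.id_map_iff hX, h]
  exact ⟨integrable_exp_mul_gaussianReal, fun t => by simp [mgf_id_gaussianReal]⟩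

lemma HasSubgaussianMGF.sum_mul_of_iIndepFun {ι : Type*} [Fintype ι] {Z : ι → Ω → ℝ}
    (hZ : ∀ j, HasSubgaussianMGF (Z j) 1 μ) (hind : iIndepFun Z μ) (v : ι → ℝ) {c : ℝ≥0}
    (hv : ∑ j, v j ^ 2 ≤ c) :
    HasSubgaussianMGF (fun ω => ∑ j, Z j ω * v j) c μ := by
  have hsum := HasSubgaussianMGF.sum_of_iIndepFun
    (hind.comp (fun j x => v j * x) fun j => measurable_const_mul (v j))
    (s := Finset.univ) fun j _ => (hZ j).const_mul (v j)
  refine (hsum.congr (ae_of_all _ fun ω => ?_)).mono ?_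
  · exact Finset.sum_congr rfl fun j _ => mul_comm _ _
  · rw [← NNReal.coe_le_coe, NNReal.coe_sum]
    exact le_of_eq_of_le (Finset.sum_congr rfl fun j _ => mul_one (v j ^ 2)) hv

lemma HasSubgaussianMGF.integral_exp_add_exp_neg_le {Y : Ω → ℝ} {c : ℝ≥0}
    (hY : HasSubgaussianMGF Y c μ) (hc : 0 < c) :
    ∫ ω, (Real.exp ((√c)⁻¹ * Y ω) + Real.exp (-(√c)⁻¹ * Y ω)) ∂μ ≤ 2 * Real.exp (1 / 2) := by
  have hmgf : ∀ t, t ^ 2 = (√c)⁻¹ ^ 2 → mgf Y μ t ≤ Real.exp (1 / 2) := fun t ht =>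
    (hY.mgf_le t).trans_eq <| by
      rw [ht, inv_pow, Real.sq_sqrt c.coe_nonneg, mul_inv_cancel₀ (NNReal.coe_pos.2 hc).ne']
  have h₁ := hmgf _ rfl
  have h₂ := hmgf _ (neg_sq _)
  rw [mgf] at h₁ h₂
  rw [integral_add (hY.integrable_exp_mul _) (hY.integrable_exp_mul _)]
  linarith

lemma integrable_sup'_abs {ι : Type*} {S : Finset ι} (hS : S.Nonempty) {Y : ι → Ω → ℝ}
    (hY : ∀ i ∈ S, Integrable (Y i) μ) : Integrable (fun ω => S.sup' hS fun i => |Y i ω|) μ := by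
  have h := Finset.sup'_induction hS (fun i ω => |Y i ω|) (p := fun f => Integrable f μ)
    (fun _ hf _ hg => hf.sup hg) fun i hi => (hY i hi).abs
  exact h.congr (ae_of_all _ fun ω => Finset.sup'_apply hS _ ω)

theorem integral_sup'_abs_le_of_hasSubgaussianMGF [IsProbabilityMeasure μ] {ι : Type*}
    {S : Finset ι} (hS : S.Nonempty) {Y : ι → Ω → ℝ} {c : ℝ≥0} (hc : 0 < c)
    (hY : ∀ i ∈ S, HasSubgaussianMGF (Y i) c μ) :
    ∫ ω, S.sup' hS (fun i => |Y i ω|) ∂μ ≤ √c * (Real.log S.card + 4) := by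
  set σ := √(c : ℝ)
  have hσ : 0 < σ := Real.sqrt_pos.2 hc
  have hE : ∀ i ∈ S, Integrable (fun ω => Real.exp (σ⁻¹ * Y i ω) + Real.exp (-σ⁻¹ * Y i ω)) μ :=
    fun i hi => ((hY i hi).integrable_exp_mul _).add ((hY i hi).integrable_exp_mul _)
  have hexp : Real.exp (1 / 2) ≤ 2 := by
    have h := Real.exp_add (1 / 2) (1 / 2)
    norm_num at h
    nlinarith [Real.exp_pos (1 / 2), Real.exp_one_lt_d9]
  calc ∫ ω, S.sup' hS (fun i => |Y i ω|) ∂μ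
      ≤ ∫ ω, (σ * Real.log S.card
          + σ * (S.card : ℝ)⁻¹ * ∑ i ∈ S, (Real.exp (σ⁻¹ * Y i ω) + Real.exp (-σ⁻¹ * Y i ω))) ∂μ :=
        integral_mono_of_nonneg (ae_of_all _ fun ω => sup'_abs_nonneg hS _)
          ((integrable_const _).add ((integrable_finsetSum _ hE).const_mul _))
          (ae_of_all _ fun ω => sup'_abs_le_log_card_add hS _ hσ)
    _ = σ * Real.log S.card + σ * (S.card : ℝ)⁻¹
          * ∑ i ∈ S, ∫ ω, (Real.exp (σ⁻¹ * Y i ω) + Real.exp (-σ⁻¹ * Y i ω)) ∂μ := by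
        rw [integral_add (integrable_const _) ((integrable_finsetSum _ hE).const_mul _),
          integral_const, probReal_univ, one_smul, integral_const_mul, integral_finsetSum _ hE]
    _ ≤ σ * Real.log S.card + σ * (S.card : ℝ)⁻¹ * ∑ _i ∈ S, 2 * Real.exp (1 / 2) := by
        gcongr with i hi
        exact (hY i hi).integral_exp_add_exp_neg_le hc
    _ = σ * (Real.log S.card + 2 * Real.exp (1 / 2)) := by
        rw [Finset.sum_const, nsmul_eq_mul]
        field_simp
    _ ≤ σ * (Real.log S.card + 4) := by gcongr; linarith

end ProbabilityTheory

namespace Chaining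

variable {Ω : Type*} (F : ℕ → ℝ) (m : ℕ)

/-- The factor `2` makes level `0` a single bucket, so that every chain starts at time `0`. -/
noncomputable def scale (ℓ : ℕ) : ℝ := 2 * (F m - F 0) / 4 ^ ℓ

noncomputable def bucket (ℓ t : ℕ) : ℕ := ⌊(F t - F 0) / scale F m ℓ⌋₊

noncomputable def bucketStart (ℓ b : ℕ) : ℕ := sInf {s | bucket F m ℓ s = b}

noncomputable def chainPoint (ℓ t : ℕ) : ℕ := bucketStart F m ℓ (bucket F m ℓ t)

/-- A level-`ℓ` link of the chain, indexed by its level-`(ℓ+1)` bucket `b`; the level-`ℓ` bucket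
containing `b` is `b / 4`. -/
noncomputable def chainIncrement (X : ℕ → Ω → ℝ) (ℓ b : ℕ) (ω : Ω) : ℝ :=
  X (bucketStart F m (ℓ + 1) b) ω - X (bucketStart F m ℓ (b / 4)) ω

noncomputable def levelBuckets (ℓ : ℕ) : Finset ℕ :=
  (Finset.range (m + 1)).image (bucket F m (ℓ + 1))

variable {F m}

lemma sqrt_scale (ℓ : ℕ) : √(scale F m ℓ) = √(2 * (F m - F 0)) / 2 ^ ℓ := by
  have h4 : (4 : ℝ) ^ ℓ = (2 ^ ℓ) ^ 2 := by rw [← pow_mul, mul_comm, pow_mul]; norm_num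
  rw [scale, Real.sqrt_div' _ (by positivity), h4, Real.sqrt_sq (by positivity)]

lemma bucket_succ_div_four (ℓ t : ℕ) : bucket F m (ℓ + 1) t / 4 = bucket F m ℓ t := by
  rw [bucket, bucket, ← Nat.floor_div_ofNat, div_div, scale, scale, pow_succ]
  congr 2
  field_simp

lemma chainPoint_le (ℓ t : ℕ) : chainPoint F m ℓ t ≤ t := Nat.sInf_le rfl

lemma bucket_chainPoint (ℓ t : ℕ) : bucket F m ℓ (chainPoint F m ℓ t) = bucket F m ℓ t :=
  Nat.sInf_mem (s := {s | bucket F m ℓ s = bucket F m ℓ t}) ⟨t, rfl⟩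

lemma chainPoint_le_chainPoint_succ (ℓ t : ℕ) :
    chainPoint F m ℓ t ≤ chainPoint F m (ℓ + 1) t := by
  refine Nat.sInf_le (show bucket F m ℓ (chainPoint F m (ℓ + 1) t) = bucket F m ℓ t from ?_)
  rw [← bucket_succ_div_four, bucket_chainPoint, bucket_succ_div_four]

lemma chainIncrement_bucket (X : ℕ → Ω → ℝ) (ℓ t : ℕ) (ω : Ω) :
    chainIncrement F m X ℓ (bucket F m (ℓ + 1) t) ω
      = X (chainPoint F m (ℓ + 1) t) ω - X (chainPoint F m ℓ t) ω := by
  rw [chainIncrement, bucket_succ_div_four]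
  rfl

lemma levelBuckets_nonempty (ℓ : ℕ) : (levelBuckets F m ℓ).Nonempty :=
  Finset.nonempty_range_add_one.image _

lemma scale_pos (hD : F 0 < F m) (ℓ : ℕ) : 0 < scale F m ℓ := by
  have := sub_pos.2 hD
  unfold scale; positivity

variable (hF : Monotone F) (hD : F 0 < F m)
include hF hD

lemma bucket_lt {t : ℕ} (ht : t ≤ m) (ℓ : ℕ) : bucket F m ℓ t < 4 ^ ℓ := by
  have hs := scale_pos hD ℓ
  have hD' := sub_pos.2 hD
  rw [bucket, Nat.floor_lt (div_nonneg (sub_nonneg.2 (hF t.zero_le)) hs.le), div_lt_iff₀ hs,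
    scale]
  push_cast
  have := hF ht
  rw [mul_div_assoc', mul_div_cancel_left₀ _ (by positivity)]
  linarith

lemma chainPoint_zero {t : ℕ} (ht : t ≤ m) : chainPoint F m 0 t = 0 := by
  have h := bucket_lt hF hD ht 0
  rw [pow_zero, Nat.lt_one_iff] at h
  rw [chainPoint, h]
  exact Nat.sInf_eq_zero.2 (Or.inl (by simp [bucket]))

lemma sub_chainPoint_lt (ℓ t : ℕ) : F t - F (chainPoint F m ℓ t) < scale F m ℓ := by
  have hs := scale_pos hD ℓ
  have h := bucket_chainPoint (F := F) (m := m) ℓ t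
  rw [bucket, bucket] at h
  have h1 := Nat.lt_floor_add_one ((F t - F 0) / scale F m ℓ)
  have h2 := Nat.floor_le (div_nonneg (sub_nonneg.2 (hF (chainPoint F m ℓ t).zero_le)) hs.le)
  rw [h] at h2
  have : ((F t - F 0) - (F (chainPoint F m ℓ t) - F 0)) / scale F m ℓ < 1 := by
    rw [sub_div]; linarith
  rw [div_lt_one hs] at this
  linarith

lemma card_levelBuckets_le (ℓ : ℕ) : (levelBuckets F m ℓ).card ≤ 4 ^ (ℓ + 1) := by
  refine (Finset.card_le_card (Finset.image_subset_iff.2 fun t ht => ?_)).trans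
    (Finset.card_range _).le
  exact Finset.mem_range.2 (bucket_lt hF hD (Nat.lt_succ_iff.1 (Finset.mem_range.1 ht)) _)

lemma abs_sub_le_sum_sup' (X : ℕ → Ω → ℝ) {t : ℕ} (ht : t ≤ m) (L : ℕ) (ω : Ω) :
    |X t ω - X 0 ω| ≤ ∑ ℓ ∈ Finset.range L, (levelBuckets F m ℓ).sup'
        (levelBuckets_nonempty ℓ) (fun b => |chainIncrement F m X ℓ b ω|)
      + (Finset.range (m + 1)).sup' Finset.nonempty_range_add_one
        (fun s => |X s ω - X (chainPoint F m L s) ω|) := by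
  have htel : X t ω - X 0 ω = ∑ ℓ ∈ Finset.range L, chainIncrement F m X ℓ (bucket F m (ℓ + 1) t) ω
      + (X t ω - X (chainPoint F m L t) ω) := by
    simp_rw [chainIncrement_bucket]
    rw [Finset.sum_range_sub (fun ℓ => X (chainPoint F m ℓ t) ω), chainPoint_zero hF hD ht]
    ring
  have hmem : t ∈ Finset.range (m + 1) := Finset.mem_range.2 (Nat.lt_succ_of_le ht)
  rw [htel]
  refine (abs_add_le _ _).trans (add_le_add ((Finset.abs_sum_le_sum_abs _ _).trans
    (Finset.sum_le_sum fun ℓ _ => ?_)) ?_)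
  · exact Finset.le_sup' (fun b => |chainIncrement F m X ℓ b ω|) (Finset.mem_image_of_mem _ hmem)
  · exact Finset.le_sup' (fun s => |X s ω - X (chainPoint F m L s) ω|) hmem

variable [MeasurableSpace Ω] {μ : Measure Ω} {X : ℕ → Ω → ℝ}
  (hX : ∀ s t, s ≤ t → t ≤ m → HasSubgaussianMGF (fun ω => X t ω - X s ω) (F t - F s).toNNReal μ)
include hX

lemma hasSubgaussianMGF_sub_chainPoint {t : ℕ} (ht : t ≤ m) (ℓ : ℕ) :
    HasSubgaussianMGF (fun ω => X t ω - X (chainPoint F m ℓ t) ω) (scale F m ℓ).toNNReal μ :=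
  (hX _ _ (chainPoint_le ℓ t) ht).mono
    (Real.toNNReal_le_toNNReal (sub_chainPoint_lt hF hD ℓ t).le)

lemma hasSubgaussianMGF_chainIncrement {ℓ b : ℕ} (hb : b ∈ levelBuckets F m ℓ) :
    HasSubgaussianMGF (chainIncrement F m X ℓ b) (scale F m ℓ).toNNReal μ := by
  obtain ⟨t, ht, rfl⟩ := Finset.mem_image.1 hb
  have htm : t ≤ m := Nat.lt_succ_iff.1 (Finset.mem_range.1 ht)
  have hincr : F (chainPoint F m (ℓ + 1) t) - F (chainPoint F m ℓ t) ≤ scale F m ℓ := by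
    linarith [hF (chainPoint_le (F := F) (m := m) (ℓ + 1) t), sub_chainPoint_lt hF hD ℓ t]
  refine ((hX _ _ (chainPoint_le_chainPoint_succ ℓ t) ((chainPoint_le _ t).trans htm)).mono
    (Real.toNNReal_le_toNNReal hincr)).congr (ae_of_all _ fun ω => ?_)
  exact (chainIncrement_bucket X ℓ t ω).symm

variable [IsProbabilityMeasure μ]

lemma integral_sup'_chainIncrement_le (ℓ : ℕ) :
    ∫ ω, (levelBuckets F m ℓ).sup' (levelBuckets_nonempty ℓ)
        (fun b => |chainIncrement F m X ℓ b ω|) ∂μ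
      ≤ √(2 * (F m - F 0)) * ((2 * ℓ + 6) / 2 ^ ℓ) := by
  have hs := scale_pos hD ℓ
  refine (integral_sup'_abs_le_of_hasSubgaussianMGF _ (Real.toNNReal_pos.2 hs)
    fun b hb => hasSubgaussianMGF_chainIncrement hF hD hX hb).trans ?_
  have hlog : Real.log (levelBuckets F m ℓ).card ≤ 2 * ℓ + 2 := by
    have hcard : ((levelBuckets F m ℓ).card : ℝ) ≤ 2 ^ (2 * (ℓ + 1)) := by
      rw [pow_mul]; exact_mod_cast card_levelBuckets_le hF hD ℓ
    refine (Real.log_le_log (Nat.cast_pos.2 (levelBuckets_nonempty ℓ).card_pos) hcard).trans ?_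
    rw [Real.log_pow]
    push_cast
    nlinarith [Real.log_two_lt_d9]
  rw [Real.coe_toNNReal _ hs.le, sqrt_scale, div_mul_eq_mul_div, mul_div_assoc]
  gcongr _ * (?_ / _)
  linarith

lemma integral_sup'_sub_chainPoint_le (L : ℕ) :
    ∫ ω, (Finset.range (m + 1)).sup' Finset.nonempty_range_add_one
        (fun s => |X s ω - X (chainPoint F m L s) ω|) ∂μ
      ≤ √(2 * (F m - F 0)) * ((Real.log (m + 1) + 4) / 2 ^ L) := by
  have hs := scale_pos hD L
  refine (integral_sup'_abs_le_of_hasSubgaussianMGF _ (Real.toNNReal_pos.2 hs)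
    fun s hs => hasSubgaussianMGF_sub_chainPoint hF hD hX
      (Nat.lt_succ_iff.1 (Finset.mem_range.1 hs)) L).trans (le_of_eq ?_)
  rw [Real.coe_toNNReal _ hs.le, sqrt_scale, Finset.card_range]
  push_cast
  ring

theorem integral_iSup_abs_sub_le {ι : Sort*} (τ : ι → ℕ) (hτ : ∀ i, τ i ≤ m) :
    ∫ ω, ⨆ i, |X (τ i) ω - X 0 ω| ∂μ ≤ 17 * √(2 * (F m - F 0)) := by
  obtain ⟨L, hL⟩ := pow_unbounded_of_one_lt (Real.log (m + 1) + 4) one_lt_two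
  set M : ℕ → Ω → ℝ := fun ℓ ω => (levelBuckets F m ℓ).sup' (levelBuckets_nonempty ℓ)
    (fun b => |chainIncrement F m X ℓ b ω|)
  set R : Ω → ℝ := fun ω => (Finset.range (m + 1)).sup' Finset.nonempty_range_add_one
    (fun s => |X s ω - X (chainPoint F m L s) ω|)
  have hM : ∀ ℓ, Integrable (M ℓ) μ := fun ℓ => integrable_sup'_abs _
    fun b hb => (hasSubgaussianMGF_chainIncrement hF hD hX hb).integrable
  have hMint : Integrable (fun ω => ∑ ℓ ∈ Finset.range L, M ℓ ω) μ :=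
    integrable_finsetSum _ fun ℓ _ => hM ℓ
  have hRint : Integrable R μ := integrable_sup'_abs _ fun s hs =>
    (hasSubgaussianMGF_sub_chainPoint hF hD hX (Nat.lt_succ_iff.1 (Finset.mem_range.1 hs))
      L).integrable
  have hgeom : ∑ ℓ ∈ Finset.range L, (2 * ℓ + 6 : ℝ) / 2 ^ ℓ ≤ 16 := by
    rw [sum_range_two_mul_add_six_div_two_pow]
    linarith [show 0 ≤ (4 * (L : ℝ) + 16) / 2 ^ L by positivity]
  have htail : (Real.log (m + 1) + 4) / 2 ^ L ≤ 1 := (div_le_one (by positivity)).2 hL.le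
  calc ∫ ω, ⨆ i, |X (τ i) ω - X 0 ω| ∂μ
      ≤ ∫ ω, (∑ ℓ ∈ Finset.range L, M ℓ ω + R ω) ∂μ :=
        integral_mono_of_nonneg (ae_of_all _ fun ω => Real.iSup_nonneg fun i => abs_nonneg _)
          (hMint.add hRint) (ae_of_all _ fun ω => Real.iSup_le
            (fun i => abs_sub_le_sum_sup' hF hD X (hτ i) L ω)
            (add_nonneg (Finset.sum_nonneg fun ℓ _ => sup'_abs_nonneg _ _)
              (sup'_abs_nonneg _ _)))
    _ = ∑ ℓ ∈ Finset.range L, ∫ ω, M ℓ ω ∂μ + ∫ ω, R ω ∂μ := by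
        rw [integral_add hMint hRint, integral_finsetSum _ fun ℓ _ => hM ℓ]
    _ ≤ ∑ ℓ ∈ Finset.range L, √(2 * (F m - F 0)) * ((2 * ℓ + 6) / 2 ^ ℓ)
          + √(2 * (F m - F 0)) * ((Real.log (m + 1) + 4) / 2 ^ L) :=
        add_le_add (Finset.sum_le_sum fun ℓ _ => integral_sup'_chainIncrement_le hF hD hX ℓ)
          (integral_sup'_sub_chainPoint_le hF hD hX L)
    _ ≤ √(2 * (F m - F 0)) * 16 + √(2 * (F m - F 0)) * 1 := by
        rw [← Finset.mul_sum]
        gcongr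
    _ = 17 * √(2 * (F m - F 0)) := by ring

end Chaining

section Stream

variable {n m : ℕ} (p : Fin m → Fin n)

lemma freq_zero : freq p 0 = 0 := by
  ext j
  simp [freq]

lemma freq_nonneg (t : ℕ) : 0 ≤ freq p t := fun _ => Nat.cast_nonneg _

lemma freq_mono : Monotone (freq p) := fun _ _ hst _ =>
  Nat.cast_le.2 <| Finset.card_le_card <|
    Finset.monotone_filter_right _ fun _ _ h => ⟨h.1.trans_le hst, h.2⟩

lemma one_le_freq (i : Fin m) : 1 ≤ freq p m (p i) := by
  unfold freq
  exact_mod_cast Finset.card_pos.2 ⟨i, by simp⟩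

lemma monotone_sum_sq_freq : Monotone fun t => ∑ j, freq p t j ^ 2 :=
  fun s _ hst => Finset.sum_le_sum fun j _ =>
    pow_le_pow_left₀ (freq_nonneg p s j) (freq_mono p hst j) 2

lemma sum_sq_freq_pos (hm : 0 < m) : 0 < ∑ j, freq p m j ^ 2 :=
  calc (0 : ℝ) < freq p m (p ⟨0, hm⟩) ^ 2 := by nlinarith [one_le_freq p ⟨0, hm⟩]
    _ ≤ ∑ j, freq p m j ^ 2 := Finset.single_le_sum (f := fun j => freq p m j ^ 2)
        (fun j _ => sq_nonneg _) (Finset.mem_univ _)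

end Stream

/-- **Chaining Inequality (Gaussian case).** There is a universal constant `C' > 0` such
that for the frequency vectors `f^(1), …, f^(m)` of any insertion-only stream and
i.i.d. standard Gaussians `Z_1, …, Z_n`, the process `X_t = ∑_j Z_j f_j^(t)` satisfies
`E[sup_{t ∈ [m]} |X_t|] ≤ C' ‖f^(m)‖₂`. -/
theorem chaining_inequality_gaussian :
    ∃ C' : ℝ, 0 < C' ∧
      ∀ (n m : ℕ), 0 < m →
      ∀ (p : Fin m → Fin n) (Ω : Type) [MeasurableSpace Ω] (μ : Measure Ω)
        [IsProbabilityMeasure μ] (Z : Fin n → Ω → ℝ),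
        (∀ i, Measurable (Z i)) →
        iIndepFun Z μ →
        (∀ i, Measure.map (Z i) μ = gaussianReal 0 1) →
        (∫ ω, (⨆ t : Fin m, |∑ j, Z j ω * freq p ((t : ℕ) + 1) j|) ∂μ)
          ≤ C' * l2norm (freq p m) := by
  refine ⟨17 * √2, by positivity, fun n m hm p Ω _ μ _ Z hmeas hind hg => ?_⟩
  set F : ℕ → ℝ := fun t => ∑ j, freq p t j ^ 2
  have hF0 : F 0 = 0 := by simp [F, freq_zero]
  have hZ : ∀ j, HasSubgaussianMGF (Z j) 1 μ := fun j =>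
    hasSubgaussianMGF_of_map_eq_gaussianReal (hmeas j).aemeasurable (hg j)
  have hX : ∀ s t, s ≤ t → t ≤ m → HasSubgaussianMGF
      (fun ω => ∑ j, Z j ω * freq p t j - ∑ j, Z j ω * freq p s j) (F t - F s).toNNReal μ := by
    intro s t hst _
    refine (HasSubgaussianMGF.sum_mul_of_iIndepFun hZ hind (freq p t - freq p s) ?_).congr
      (ae_of_all _ fun ω => ?_)
    · exact (sum_sq_sub_le_sum_sq_sub_sum_sq (freq_nonneg p s) (freq_mono p hst)).trans
        (Real.le_coe_toNNReal _)
    · simp [mul_sub]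
  have hD : F 0 < F m := hF0 ▸ sum_sq_freq_pos p hm
  have h := Chaining.integral_iSup_abs_sub_le (monotone_sum_sq_freq p) hD hX
    (fun t : Fin m => (t : ℕ) + 1) fun t => t.isLt
  simp only [freq_zero, Pi.zero_apply, mul_zero, Finset.sum_const_zero, sub_zero, ne_eq,
    OfNat.ofNat_ne_zero, not_false_eq_true, zero_pow] at h
  rwa [Real.sqrt_mul zero_le_two, ← mul_assoc] at h
end

section
/- Let f ∈ ℝ^n have nonnegative coordinates, let H ∈ [n], let A : [n] → {0,1} with A_H = 1, and let C > 0. Suppose h ≥ 0 and vectors v, Y, X₀, X₁ ∈ ℝ^d satisfy: X₁ = h·v + Y, ‖v‖₂ ≥ 1/2, ‖Y‖₂² ≤ C² ∑_{j ≠ H, A_j = 1} f_j², ‖X₀‖₂² ≤ C² ∑_{j : A_j = 0} f_j², and h² > 8 C² ∑_{j ≠ H} f_j². Then ‖X₁‖₂ > ‖X₀‖₂. -/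
lemma l2norm_eq_norm {k : ℕ} (x : Fin k → ℝ) :
    l2norm x = ‖(WithLp.equiv 2 (Fin k → ℝ)).symm x‖ := by
  simp [l2norm, EuclideanSpace.norm_eq, Real.norm_eq_abs, sq_abs]

lemma l2norm_nonneg {k : ℕ} (x : Fin k → ℝ) : 0 ≤ l2norm x :=
  Real.sqrt_nonneg _

/-- **Deterministic core of Pair correctness.** If the heavy item `H` lies in bucket `1`
(`A H = 1`), the two sketches are tame (`‖Y‖₂² ≤ C² ∑_{j≠H, A_j=1} f_j²` and
`‖X₀‖₂² ≤ C² ∑_{A_j=0} f_j²`), `‖v‖₂ ≥ 1/2`, `X₁ = h·v + Y` and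
`h² > 8C² ∑_{j≠H} f_j²`, then `‖X₁‖₂ > ‖X₀‖₂`. -/
theorem pair_deterministic_core (n d : ℕ) (f : Fin n → ℝ) (H : Fin n)
    (A : Fin n → Fin 2) (C : ℝ) (h : ℝ) (v Y X₀ X₁ : Fin d → ℝ)
    (hf : ∀ j, 0 ≤ f j) (hA : A H = 1) (hC : 0 < C) (hh : 0 ≤ h)
    (hX₁ : X₁ = fun i => h * v i + Y i)
    (hv : 1/2 ≤ l2norm v)
    (hY : l2norm Y ^ 2 ≤
      C ^ 2 * ∑ j ∈ Finset.univ.filter (fun j => j ≠ H ∧ A j = 1), f j ^ 2)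
    (hX₀ : l2norm X₀ ^ 2 ≤
      C ^ 2 * ∑ j ∈ Finset.univ.filter (fun j => A j = 0), f j ^ 2)
    (hheavy : 8 * C ^ 2 * ∑ j ∈ Finset.univ.filter (fun j => j ≠ H), f j ^ 2 < h ^ 2) :
    l2norm X₀ < l2norm X₁ := by
  set a := l2norm Y with ha
  set b := l2norm X₀ with hb
  have ha0 : 0 ≤ a := l2norm_nonneg Y
  have hb0 : 0 ≤ b := l2norm_nonneg X₀
  -- The two filtered sums add up to at most the full sum over j ≠ H.
  have hsum : (∑ j ∈ Finset.univ.filter (fun j => A j = 0), f j ^ 2)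
      + (∑ j ∈ Finset.univ.filter (fun j => j ≠ H ∧ A j = 1), f j ^ 2)
      ≤ ∑ j ∈ Finset.univ.filter (fun j => j ≠ H), f j ^ 2 := by
    have hdisj : Disjoint (Finset.univ.filter (fun j => A j = 0))
        (Finset.univ.filter (fun j : Fin n => j ≠ H ∧ A j = 1)) := by
      rw [Finset.disjoint_filter]
      rintro j _ h0 ⟨_, h1⟩
      rw [h0] at h1
      exact absurd h1 (by decide)
    rw [← Finset.sum_union hdisj]
    apply Finset.sum_le_sum_of_subset_of_nonneg
    · intro j hj
      simp only [Finset.mem_union, Finset.mem_filter, Finset.mem_univ, true_and] at hj ⊢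
      rcases hj with h0 | ⟨hne, _⟩
      · intro hje; rw [hje, hA] at h0; exact absurd h0 (by decide)
      · exact hne
    · intro j _ _; positivity
  have hS : a ^ 2 + b ^ 2 ≤ C ^ 2 * ∑ j ∈ Finset.univ.filter (fun j => j ≠ H), f j ^ 2 := by
    calc a ^ 2 + b ^ 2 ≤ C ^ 2 * (∑ j ∈ Finset.univ.filter (fun j => j ≠ H ∧ A j = 1), f j ^ 2)
        + C ^ 2 * (∑ j ∈ Finset.univ.filter (fun j => A j = 0), f j ^ 2) := by linarith
      _ ≤ _ := by nlinarith [sq_nonneg C]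
  -- (a + b)^2 ≤ 2 (a^2 + b^2) < h^2 / 4, so a + b < h / 2.
  have hab : a + b < h / 2 := by
    have h1 : (a + b) ^ 2 < (h / 2) ^ 2 := by nlinarith [sq_nonneg (a - b)]
    exact lt_of_pow_lt_pow_left₀ 2 (by linarith) h1
  -- Lower bound on ‖X₁‖ via the triangle inequality in EuclideanSpace.
  have hX1 : h / 2 - a ≤ l2norm X₁ := by
    set v' := (WithLp.equiv 2 (Fin d → ℝ)).symm v
    set Y' := (WithLp.equiv 2 (Fin d → ℝ)).symm Y
    set X₁' := (WithLp.equiv 2 (Fin d → ℝ)).symm X₁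
    have heq : h • v' = X₁' - Y' := by
      ext i
      simp [v', Y', X₁', hX₁]
    have htri : ‖h • v'‖ ≤ ‖X₁'‖ + ‖Y'‖ := by
      rw [heq]; exact norm_sub_le _ _
    have hnorm : ‖h • v'‖ = h * ‖v'‖ := by
      rw [norm_smul, Real.norm_eq_abs, abs_of_nonneg hh]
    have hv' : 1/2 ≤ ‖v'‖ := by rw [← l2norm_eq_norm]; exact hv
    have hhv : h * (1/2) ≤ h * ‖v'‖ := mul_le_mul_of_nonneg_left hv' hh
    rw [l2norm_eq_norm X₁]
    have hY' : ‖Y'‖ = a := (l2norm_eq_norm Y).symm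
    rw [hnorm] at htri
    rw [hY'] at htri
    linarith
  linarith
end

section
/- There exists a universal constant K > 0 with the following property. Let n ≥ 2, R ∈ ℕ, H ∈ [n], and 0 < δ ≤ 1/200. For each r ∈ [R], let I_r = (I_{r,1}, …, I_{r,n}) be a random vector with entries in {0,1}, and suppose the vectors I_1, …, I_R are mutually independent, with E[I_{r,H}] ≥ 1 − 3δ and E[I_{r,j}] ≤ 1/2 + 3δ for every r ∈ [R] and every j ≠ H. If R ≥ K log n, then with probability at least 1 − 1/n, for every j ≠ H one has ∑_{r=1}^R I_{r,H} > ∑_{r=1}^R I_{r,j}; in particular H is the unique maximizer of j ↦ #{r ∈ [R] : I_{r,j} = 1}. -/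
open MeasureTheory ProbabilityTheory
open scoped ENNReal

/-!
Fix a competitor `j ≠ H`. The round differences `1[I r j] - 1[I r H]` are independent, lie in
`[-1, 1]` and have mean at most `(1/2 + 3δ) - (1 - 3δ) ≤ -2/5`, so by Hoeffding's inequality `j`
wins at least as many rounds as `H` with probability at most `exp (-2R/25)`. A union bound over
the `n - 1` competitors leaves a failure probability of at most `n exp (-2R/25) ≤ 1/n` as soon as
`R ≥ 25 log n`.
-/

variable {Ω : Type*} [MeasurableSpace Ω] {μ : Measure Ω}

lemma measureReal_sum_nonneg_le_of_iIndepFun [IsProbabilityMeasure μ] {ι : Type*} [Fintype ι]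
    {X : ι → Ω → ℝ} (hX : ∀ i, AEMeasurable (X i) μ) (hindep : iIndepFun X μ) {a b γ : ℝ}
    (hab : ∀ i, ∀ᵐ ω ∂μ, X i ω ∈ Set.Icc a b) (hγ : 0 ≤ γ) (hmean : ∀ i, μ[X i] ≤ -γ) :
    μ.real {ω | 0 ≤ ∑ i, X i ω} ≤
      Real.exp (-(2 * Fintype.card ι * γ ^ 2 / (b - a) ^ 2)) := by
  have hcentered : iIndepFun (fun i ↦ (· - μ[X i]) ∘ X i) μ :=
    hindep.comp _ fun i ↦ measurable_id.sub_const _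
  have hhoeffding := HasSubgaussianMGF.measure_sum_ge_le_of_iIndepFun hcentered (s := Finset.univ)
    (fun i _ ↦ hasSubgaussianMGF_of_mem_Icc (hX i) (hab i))
    (mul_nonneg (Fintype.card ι).cast_nonneg hγ)
  have hsub : {ω | 0 ≤ ∑ i, X i ω} ⊆ {ω | Fintype.card ι * γ ≤ ∑ i, (X i ω - μ[X i])} := by
    intro ω hω
    have : ∑ i : ι, (μ[X i] + γ) ≤ 0 := Finset.sum_nonpos fun i _ ↦ by linarith [hmean i]
    simp only [Set.mem_ofPred_eq, Finset.sum_sub_distrib, Finset.sum_add_distrib,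
      Finset.sum_const, Finset.card_univ, nsmul_eq_mul] at hω this ⊢
    linarith
  refine (measureReal_mono hsub).trans (hhoeffding.trans_eq ?_)
  congr 1
  simp only [Finset.sum_const, Finset.card_univ, nsmul_eq_mul, NNReal.coe_mul, NNReal.coe_natCast,
    NNReal.coe_pow, NNReal.coe_div, coe_nnnorm, Real.norm_eq_abs, NNReal.coe_ofNat, div_pow, sq_abs]
  rcases eq_or_ne (Fintype.card ι : ℝ) 0 with hk | hk
  · simp [hk]
  rcases eq_or_ne (b - a) 0 with hba | hba
  · simp [hba]
  field_simp

lemma integral_ite_eq_measureReal {p : Ω → Bool} (hp : Measurable p) :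
    ∫ ω, (if p ω = true then (1 : ℝ) else 0) ∂μ = μ.real {ω | p ω = true} := by
  rw [← integral_indicator_one (s := {ω | p ω = true}) (hp (measurableSet_singleton true))]
  congr 1 with ω
  simp [Set.indicator_apply]

def winCount {ι α : Type*} [Fintype ι] (I : ι → Ω → α → Bool) (a : α) (ω : Ω) : ℕ :=
  ∑ i, if I i ω a = true then 1 else 0

lemma measure_winCount_le_le [IsProbabilityMeasure μ] {ι α : Type*} [Fintype ι]
    {I : ι → Ω → α → Bool} (hI : ∀ i, Measurable (I i)) (hindep : iIndepFun I μ) {a b : α}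
    {γ : ℝ} (hγ : 0 ≤ γ)
    (hgap : ∀ i, μ.real {ω | I i ω b = true} + γ ≤ μ.real {ω | I i ω a = true}) :
    μ {ω | winCount I a ω ≤ winCount I b ω} ≤
      ENNReal.ofReal (Real.exp (-(Fintype.card ι * γ ^ 2 / 2))) := by
  let f : Bool → ℝ := fun x ↦ if x = true then 1 else 0
  let g : (α → Bool) → ℝ := fun v ↦ f (v b) - f (v a)
  have hf : ∀ i c, Measurable fun ω ↦ f (I i ω c) := fun i c ↦
    (Measurable.of_discrete (f := f)).comp ((measurable_pi_apply c).comp (hI i))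
  have hg : Measurable g :=
    ((Measurable.of_discrete (f := f)).comp (measurable_pi_apply b)).sub
      ((Measurable.of_discrete (f := f)).comp (measurable_pi_apply a))
  have hmean : ∀ i, μ[g ∘ I i] ≤ -γ := by
    intro i
    have hint : ∀ c, Integrable (fun ω ↦ f (I i ω c)) μ := fun c ↦
      .of_bound (hf i c).aestronglyMeasurable 1 (ae_of_all _ fun ω ↦ by
        simp only [f]; split_ifs <;> simp)
    have hprob : ∀ c, μ[fun ω ↦ f (I i ω c)] = μ.real {ω | I i ω c = true} := fun c ↦
      integral_ite_eq_measureReal (p := fun ω ↦ I i ω c) ((measurable_pi_apply c).comp (hI i))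
    calc μ[g ∘ I i] = μ.real {ω | I i ω b = true} - μ.real {ω | I i ω a = true} := by
          rw [← hprob, ← hprob]; exact integral_sub (hint b) (hint a)
      _ ≤ -γ := by linarith [hgap i]
  have hbound := measureReal_sum_nonneg_le_of_iIndepFun (X := fun i ↦ g ∘ I i) (a := -1) (b := 1)
    (fun i ↦ (hg.comp (hI i)).aemeasurable) (hindep.comp (fun _ ↦ g) fun _ ↦ hg)
    (fun i ↦ ae_of_all _ fun ω ↦ by simp only [g, f, Function.comp_apply]; split_ifs <;> norm_num)
    hγ hmean
  have hsub : {ω | winCount I a ω ≤ winCount I b ω} ⊆ {ω | 0 ≤ ∑ i, (g ∘ I i) ω} := by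
    intro ω hω
    simp only [Set.mem_ofPred_eq, winCount, Function.comp_apply, g, f,
      Finset.sum_sub_distrib] at hω ⊢
    rw [sub_nonneg]
    exact_mod_cast hω
  calc _ ≤ μ {ω | 0 ≤ ∑ i, (g ∘ I i) ω} := measure_mono hsub
    _ = ENNReal.ofReal (μ.real {ω | 0 ≤ ∑ i, (g ∘ I i) ω}) :=
        (ofReal_measureReal (measure_ne_top μ _)).symm
    _ ≤ _ := by
      refine ENNReal.ofReal_le_ofReal (hbound.trans_eq ?_)
      norm_num
      ring_nf

lemma one_sub_card_mul_le_measure_forall [IsProbabilityMeasure μ] {α : Type*} [Fintype α]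
    (p : α → Prop) [DecidablePred p] {P : α → Ω → Prop} {ε : ℝ≥0∞}
    (h : ∀ j, p j → μ {ω | ¬ P j ω} ≤ ε) :
    1 - (Finset.univ.filter p).card * ε ≤ μ {ω | ∀ j, p j → P j ω} := by
  set G := {ω | ∀ j, p j → P j ω}
  have hGc : μ Gᶜ ≤ (Finset.univ.filter p).card * ε :=
    calc μ Gᶜ = μ (⋃ j ∈ Finset.univ.filter p, {ω | ¬ P j ω}) := by
          congr 1; ext ω; simp [G]
      _ ≤ ∑ j ∈ Finset.univ.filter p, μ {ω | ¬ P j ω} := measure_biUnion_finset_le _ _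
      _ ≤ ∑ _j ∈ Finset.univ.filter p, ε :=
          Finset.sum_le_sum fun j hj ↦ h j (Finset.mem_filter.1 hj).2
      _ = (Finset.univ.filter p).card * ε := by rw [Finset.sum_const, nsmul_eq_mul]
  rw [tsub_le_iff_right, ← measure_univ (μ := μ)]
  exact (measure_univ_le_add_compl G).trans (by gcongr)

lemma mul_exp_neg_le_inv {x t : ℝ} (hx : 0 < x) (h : 2 * Real.log x ≤ t) :
    x * Real.exp (-t) ≤ x⁻¹ :=
  calc x * Real.exp (-t) ≤ x * Real.exp (-Real.log (x ^ 2)) := by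
        rw [Real.log_pow]; gcongr; exact_mod_cast h
    _ = x⁻¹ := by
        rw [Real.exp_neg, Real.exp_log (by positivity)]
        field_simp

/-- **Probabilistic core of Sieve/Selector correctness.** There is a universal `K > 0`
such that: if in each of `R ≥ K log n` mutually independent rounds, a `{0,1}`-vector
`I_r` is drawn with `E[I_{r,H}] ≥ 1 − 3δ` and `E[I_{r,j}] ≤ 1/2 + 3δ` for `j ≠ H`
(`0 < δ ≤ 1/200`), then with probability at least `1 − 1/n` the heavy item `H` wins
strictly more rounds than every other item. -/
theorem sieve_selector_core :
    ∃ K : ℝ, 0 < K ∧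
      ∀ (n : ℕ), 2 ≤ n →
      ∀ (R : ℕ) (H : Fin n) (δ : ℝ), 0 < δ → δ ≤ 1/200 →
      ∀ (Ω : Type) [MeasurableSpace Ω] (μ : Measure Ω) [IsProbabilityMeasure μ]
        (I : Fin R → Ω → (Fin n → Bool)),
        (∀ r, Measurable (I r)) →
        iIndepFun I μ →
        (∀ r, 1 - 3 * δ ≤ (μ {ω | I r ω H = true}).toReal) →
        (∀ r, ∀ j : Fin n, j ≠ H → (μ {ω | I r ω j = true}).toReal ≤ 1/2 + 3 * δ) →
        K * Real.log n ≤ (R : ℝ) →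
        ENNReal.ofReal (1 - 1/(n : ℝ)) ≤
          μ {ω | ∀ j : Fin n, j ≠ H →
              (∑ r, (if I r ω j = true then 1 else 0) : ℕ) <
                ∑ r, (if I r ω H = true then 1 else 0)} := by
  refine ⟨25, by norm_num, fun n hn R H δ _ hδ Ω _ μ _ I hI hindep hheavy hlight hR ↦ ?_⟩
  have hn0 : (0 : ℝ) < n := Nat.cast_pos.2 (by omega)
  set ε := Real.exp (-(R * (2 / 5) ^ 2 / 2))
  have hcompetitor : ∀ j, j ≠ H →
      μ {ω | ¬ winCount I j ω < winCount I H ω} ≤ ENNReal.ofReal ε := fun j hj ↦ by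
    simpa only [not_lt, Fintype.card_fin] using measure_winCount_le_le hI hindep (by norm_num)
      fun r ↦ by simp only [measureReal_def]; linarith [hheavy r, hlight r j hj]
  have hcard : ((Finset.univ.filter (· ≠ H)).card : ℝ) * ε ≤ 1 / n :=
    calc _ ≤ n * ε := by
          gcongr
          exact_mod_cast (Finset.card_filter_le _ _).trans_eq (Finset.card_fin n)
      _ ≤ (n : ℝ)⁻¹ := mul_exp_neg_le_inv hn0 (by linarith)
      _ = 1 / n := (one_div _).symm
  calc ENNReal.ofReal (1 - 1 / n) = 1 - ENNReal.ofReal (1 / n) := by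
        rw [ENNReal.ofReal_sub _ (by positivity), ENNReal.ofReal_one]
    _ ≤ 1 - (Finset.univ.filter (· ≠ H)).card * ENNReal.ofReal ε := by
        gcongr
        rw [← ENNReal.ofReal_natCast, ← ENNReal.ofReal_mul (by positivity)]
        exact ENNReal.ofReal_le_ofReal hcard
    _ ≤ _ := one_sub_card_mul_le_measure_forall _ hcompetitor
end
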